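/- Let K ∈ ℕ₀ and let f : ℝ → ℝ be 2π-periodic and K-times continuously differentiable. Then there exists a constant C_K > 0, depending only on K, such that for every N ∈ ℕ with N ≥ 1 there exists a real trigonometric polynomial T of degree at most ⌈(K+3)/2⌉·⌊N/2⌋ satisfying sup_{x∈ℝ} |f(x) − T(x)| ≤ C_K · ω_{f^{(K)}}(1/N) / N^K, where ω_g(δ) := sup{|g(x+t) − g(x)| : x ∈ ℝ, |t| < δ} is the modulus of continuity. -/

import Mathlib

/-!
Let `Lₙ` be convolution with the normalised Jackson kernel `Jₙ = Fₙ²`, where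
`Fₙ(t) = |∑_{j<n} e^{ijt}|²`. As `Jₙ` is a cosine polynomial of degree `2n - 2`, so is `Lₙ g`,
and `Lₙ` commutes with differentiation. The bounds `Fₙ ≥ n²/2` on `|t| ≤ 1/n` and
`Fₙ(t) ≤ π²/t²` give `∫ Jₙ ≥ n³/2` and `∫ t² Jₙ ≤ (1 + 2π⁴) n`; together with
`|g(x+t) - g(x)| ≤ (1 + n|t|) ω_g(1/n)` this yields `|g - Lₙ g| ≤ C ω_g(1/n)`.
For `E = I - Lₙ` the mean value theorem gives `ω_{E h}(1/n) ≤ (1/n) sup |E h'| ≤ (C/n) ω_{h'}(1/n)`,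
so by induction `|E^{K+1} f| ≤ C^{K+1} n^{-K} ω_{f^{(K)}}(1/n)`, while `f - E^{K+1} f` is a sum of
images of `Lₙ`, hence a trigonometric polynomial of degree `2n - 2`. Take `n = ⌊N/2⌋ + 1`.
-/

open Real

/-- Global modulus of continuity of `g : ℝ → ℝ`. -/
noncomputable def modulusOfContinuity (g : ℝ → ℝ) (δ : ℝ) : ℝ :=
  sSup {y : ℝ | ∃ x t : ℝ, |t| < δ ∧ y = |g (x + t) - g x|}

open Finset Bornology intervalIntegral

theorem Function.Periodic.iteratedDeriv {g : ℝ → ℝ} {c : ℝ} (h : Function.Periodic g c)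
    (k : ℕ) : Function.Periodic (iteratedDeriv k g) c := fun x => by
  rw [← congrFun (iteratedDeriv_comp_add_const k g c) x, funext h]

theorem Function.Periodic.deriv {g : ℝ → ℝ} {c : ℝ} (h : Function.Periodic g c) :
    Function.Periodic (deriv g) c := by
  simpa using h.iteratedDeriv 1

theorem integral_inv_sq {a b : ℝ} (h : (0 : ℝ) ∉ Set.uIcc a b) :
    ∫ t in a..b, (t ^ 2)⁻¹ = a⁻¹ - b⁻¹ := by
  simp_rw [← zpow_natCast, ← zpow_neg]
  rw [integral_zpow (Or.inr ⟨by norm_num, h⟩)]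
  norm_num
  ring

theorem hasDerivAt_integral_comp_add_mul {g k : ℝ → ℝ} {a b B : ℝ} (hg : ContDiff ℝ 1 g)
    (hB : ∀ y, |deriv g y| ≤ B) (hk : Continuous k) (x : ℝ) :
    HasDerivAt (fun x => ∫ t in a..b, g (x + t) * k t) (∫ t in a..b, deriv g (x + t) * k t) x := by
  have hd : Differentiable ℝ g := hg.differentiable one_ne_zero
  refine (hasDerivAt_integral_of_dominated_loc_of_deriv_le
    (F := fun x t => g (x + t) * k t) (F' := fun x t => deriv g (x + t) * k t)
    (bound := fun t => B * |k t|) (s := Set.univ) Filter.univ_mem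
    (Filter.Eventually.of_forall fun y =>
      (by fun_prop : Continuous fun t => g (y + t) * k t).aestronglyMeasurable)
    ((by fun_prop : Continuous fun t => g (x + t) * k t).intervalIntegrable _ _)
    (by fun_prop : Continuous fun t => deriv g (x + t) * k t).aestronglyMeasurable
    (Filter.Eventually.of_forall fun t _ y _ => ?_)
    ((by fun_prop : Continuous fun t => B * |k t|).intervalIntegrable _ _)
    (Filter.Eventually.of_forall fun t _ y _ => ?_)).2
  · rw [norm_mul, Real.norm_eq_abs, Real.norm_eq_abs]
    exact mul_le_mul_of_nonneg_right (hB _) (abs_nonneg _)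
  · exact ((hd (y + t)).hasDerivAt.comp_add_const y t).mul_const (k t)

section ModulusOfContinuity

variable {g : ℝ → ℝ} {δ : ℝ}

theorem bddAbove_modulusOfContinuity_set (hg : IsBounded (Set.range g)) :
    BddAbove {y : ℝ | ∃ x t : ℝ, |t| < δ ∧ y = |g (x + t) - g x|} := by
  obtain ⟨C, hC⟩ := isBounded_iff_forall_norm_le.1 hg
  refine ⟨2 * C, ?_⟩
  rintro _ ⟨x, t, -, rfl⟩
  have h₁ := hC _ (Set.mem_range_self (x + t))
  have h₂ := hC _ (Set.mem_range_self x)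
  rw [Real.norm_eq_abs] at h₁ h₂
  linarith [abs_sub (g (x + t)) (g x)]

theorem abs_sub_le_modulusOfContinuity (hg : IsBounded (Set.range g)) {t : ℝ} (ht : |t| < δ)
    (x : ℝ) : |g (x + t) - g x| ≤ modulusOfContinuity g δ :=
  le_csSup (bddAbove_modulusOfContinuity_set hg) ⟨x, t, ht, rfl⟩

theorem modulusOfContinuity_nonneg (hg : IsBounded (Set.range g)) (hδ : 0 < δ) :
    0 ≤ modulusOfContinuity g δ := by
  simpa using abs_sub_le_modulusOfContinuity hg (t := 0) (by simpa using hδ) 0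

theorem modulusOfContinuity_le {A : ℝ} (hA : 0 ≤ A)
    (h : ∀ x t : ℝ, |t| < δ → |g (x + t) - g x| ≤ A) : modulusOfContinuity g δ ≤ A :=
  Real.sSup_le (by rintro _ ⟨x, t, ht, rfl⟩; exact h x t ht) hA

theorem abs_sub_le_nat_mul_modulusOfContinuity (hg : IsBounded (Set.range g)) {s : ℝ}
    (hs : |s| < δ) (x : ℝ) (m : ℕ) : |g (x + m * s) - g x| ≤ m * modulusOfContinuity g δ := by
  induction m with
  | zero => simp
  | succ m ih =>
    calc |g (x + (m + 1 : ℕ) * s) - g x|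
        = |(g (x + m * s + s) - g (x + m * s)) + (g (x + m * s) - g x)| := by
          push_cast; ring_nf
      _ ≤ modulusOfContinuity g δ + m * modulusOfContinuity g δ :=
          (abs_add_le _ _).trans (add_le_add (abs_sub_le_modulusOfContinuity hg hs _) ih)
      _ = (m + 1 : ℕ) * modulusOfContinuity g δ := by push_cast; ring

theorem abs_sub_le_one_add_div_mul_modulusOfContinuity (hg : IsBounded (Set.range g))
    (hδ : 0 < δ) (x t : ℝ) :
    |g (x + t) - g x| ≤ (1 + |t| / δ) * modulusOfContinuity g δ := by
  set m := ⌊|t| / δ⌋₊ + 1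
  have hm : |t| / δ < m := by simpa [m] using Nat.lt_floor_add_one (|t| / δ)
  have hm₀ : (0 : ℝ) < m := by positivity
  have hs : |t / m| < δ := by
    rw [abs_div, abs_of_pos hm₀, div_lt_iff₀ hm₀, mul_comm]
    rwa [div_lt_iff₀ hδ] at hm
  have hmt := abs_sub_le_nat_mul_modulusOfContinuity hg hs x m
  rw [mul_div_cancel₀ _ hm₀.ne'] at hmt
  refine hmt.trans (mul_le_mul_of_nonneg_right ?_ (modulusOfContinuity_nonneg hg hδ))
  have := Nat.floor_le (div_nonneg (abs_nonneg t) hδ.le)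
  push_cast [m]
  linarith

theorem modulusOfContinuity_le_one_add_div_mul (hg : IsBounded (Set.range g)) (hδ : 0 < δ)
    {δ' : ℝ} (hδ' : 0 ≤ δ') :
    modulusOfContinuity g δ' ≤ (1 + δ' / δ) * modulusOfContinuity g δ := by
  have hω := modulusOfContinuity_nonneg hg hδ
  refine modulusOfContinuity_le (by positivity) fun x t ht =>
    (abs_sub_le_one_add_div_mul_modulusOfContinuity hg hδ x t).trans ?_
  gcongr

theorem modulusOfContinuity_one_div_le_three_mul (hg : IsBounded (Set.range g)) {m N : ℕ}
    (hN : 1 ≤ N) (hNm : N ≤ 2 * m) :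
    modulusOfContinuity g (1 / m) ≤ 3 * modulusOfContinuity g (1 / N) := by
  have hN₀ : (0 : ℝ) < N := by exact_mod_cast hN
  have hm₀ : (0 : ℝ) < m := by exact_mod_cast (by omega : 0 < m)
  have hratio : 1 / (m : ℝ) / (1 / N) ≤ 2 := by
    rw [div_div_div_cancel_left' _ _ one_ne_zero, div_le_iff₀ hm₀]
    exact_mod_cast hNm
  refine (modulusOfContinuity_le_one_add_div_mul hg (one_div_pos.2 hN₀) (by positivity)).trans ?_
  have := modulusOfContinuity_nonneg hg (one_div_pos.2 hN₀)
  nlinarith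

theorem modulusOfContinuity_le_mul_of_abs_deriv_le (hδ : 0 ≤ δ) {B : ℝ}
    (hg : Differentiable ℝ g) (hB : ∀ y, |deriv g y| ≤ B) :
    modulusOfContinuity g δ ≤ δ * B := by
  have hB₀ : 0 ≤ B := (abs_nonneg _).trans (hB 0)
  refine modulusOfContinuity_le (mul_nonneg hδ hB₀) fun x t ht => ?_
  have := convex_univ.norm_image_sub_le_of_norm_deriv_le (fun y _ => hg y) (fun y _ => hB y)
    (Set.mem_univ x) (Set.mem_univ (x + t))
  simp only [Real.norm_eq_abs, add_sub_cancel_left] at this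
  nlinarith [abs_nonneg t]

end ModulusOfContinuity

section TrigPoly

def trigPoly (M : ℕ) : Submodule ℝ (ℝ → ℝ) where
  carrier := {p | ∃ a b : ℕ → ℝ, ∀ x, p x = a 0 + ∑ n ∈ Icc 1 M,
    (a n * cos (n * x) + b n * sin (n * x))}
  add_mem' := by
    rintro p q ⟨a, b, hp⟩ ⟨a', b', hq⟩
    refine ⟨a + a', b + b', fun x => ?_⟩
    rw [Pi.add_apply, hp, hq, add_add_add_comm, ← sum_add_distrib]
    congr 1
    exact sum_congr rfl fun n _ => by simp only [Pi.add_apply]; ring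
  zero_mem' := ⟨0, 0, by simp⟩
  smul_mem' := by
    rintro c p ⟨a, b, hp⟩
    refine ⟨c • a, c • b, fun x => ?_⟩
    simp only [Pi.smul_apply, smul_eq_mul, hp, mul_add, mul_sum, mul_assoc]

variable {M : ℕ} {p : ℝ → ℝ}

theorem cos_nat_mul_mem_trigPoly {j : ℕ} (hj : j ≤ M) : (fun x => cos (j * x)) ∈ trigPoly M := by
  refine ⟨Pi.single j 1, 0, fun x => ?_⟩
  rcases j.eq_zero_or_pos with rfl | hj₀
  · simp [Pi.single_apply]
  · simp [Pi.single_apply, hj₀.ne', Nat.one_le_iff_ne_zero, hj]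

theorem cos_int_mul_mem_trigPoly {m : ℤ} (hm : m.natAbs ≤ M) :
    (fun x => cos (m * x)) ∈ trigPoly M := by
  convert cos_nat_mul_mem_trigPoly hm using 2 with x
  rcases m.natAbs_eq with h | h
  · rw [h]; simp
  · rw [h]; simp [neg_mul]

theorem periodic_of_mem_trigPoly (hp : p ∈ trigPoly M) : Function.Periodic p (2 * π) := by
  obtain ⟨a, b, hp⟩ := hp
  intro x
  simp only [hp, mul_add, cos_add_nat_mul_two_pi, sin_add_nat_mul_two_pi]

theorem contDiff_of_mem_trigPoly (hp : p ∈ trigPoly M) {k : WithTop ℕ∞} : ContDiff ℝ k p := by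
  obtain ⟨a, b, hp⟩ := hp
  rw [funext hp]
  fun_prop

theorem integral_mul_comp_sub_mem_trigPoly {g : ℝ → ℝ} (hg : Continuous g)
    (hp : p ∈ trigPoly M) (a b : ℝ) : (fun x => ∫ u in a..b, g u * p (u - x)) ∈ trigPoly M := by
  obtain ⟨α, β, hp⟩ := hp
  set A : ℕ → ℝ → ℝ := fun j u => g u * (α j * cos (j * u) + β j * sin (j * u))
  set B : ℕ → ℝ → ℝ := fun j u => g u * (α j * sin (j * u) - β j * cos (j * u))
  -- by the addition formulas, `p (u - x)` is a trigonometric polynomial in `x` with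
  -- coefficients depending on `u`
  refine ⟨fun j => ∫ u in a..b, A j u, fun j => ∫ u in a..b, B j u, fun x => ?_⟩
  have hA : ∀ j, Continuous (A j) := fun j => by fun_prop
  have hexpand : ∀ u, g u * p (u - x) =
      A 0 u + ∑ j ∈ Icc 1 M, (A j u * cos (j * x) + B j u * sin (j * x)) := by
    intro u
    simp only [A, B, hp, mul_sub, cos_sub, sin_sub, mul_add, mul_sum, CharP.cast_eq_zero, zero_mul,
      cos_zero, sin_zero, mul_one, mul_zero, add_zero]
    exact congrArg _ (sum_congr rfl fun j _ => by ring)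
  simp_rw [hexpand]
  rw [integral_add ((hA 0).intervalIntegrable _ _)
      ((continuous_finsetSum _ fun j _ => by fun_prop).intervalIntegrable _ _),
    integral_finsetSum fun j _ => (by fun_prop : Continuous _).intervalIntegrable _ _]
  congr 1
  refine sum_congr rfl fun j _ => ?_
  rw [integral_add ((by fun_prop : Continuous _).intervalIntegrable _ _)
      ((by fun_prop : Continuous _).intervalIntegrable _ _),
    integral_mul_const, integral_mul_const]

end TrigPoly

section Kernel

/-- `n` times the Fejér kernel of order `n - 1`; it equals `|∑_{j<n} e^{ijt}|²`. -/
noncomputable def fejerKernel (n : ℕ) (t : ℝ) : ℝ :=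
  ∑ j ∈ range n, ∑ k ∈ range n, cos (((j : ℝ) - k) * t)

noncomputable def jacksonKernel (n : ℕ) (t : ℝ) : ℝ := fejerKernel n t ^ 2

variable {n : ℕ} {t : ℝ}

theorem continuous_jacksonKernel (n : ℕ) : Continuous (jacksonKernel n) := by
  unfold jacksonKernel fejerKernel
  fun_prop

theorem jacksonKernel_nonneg (n : ℕ) (t : ℝ) : 0 ≤ jacksonKernel n t := sq_nonneg _

theorem fejerKernel_eq_sq_add_sq (n : ℕ) (t : ℝ) :
    fejerKernel n t = (∑ j ∈ range n, cos (j * t)) ^ 2 + (∑ j ∈ range n, sin (j * t)) ^ 2 := by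
  simp only [fejerKernel, sq, sum_mul_sum, ← sum_add_distrib, sub_mul, cos_sub]

theorem fejerKernel_eq_normSq (n : ℕ) (t : ℝ) :
    fejerKernel n t = Complex.normSq (∑ j ∈ range n, Complex.exp (t * Complex.I) ^ j) := by
  simp only [fejerKernel_eq_sq_add_sq, Complex.normSq_apply, Complex.re_sum, Complex.im_sum,
    ← Complex.exp_nat_mul, ← mul_assoc]
  simp only [← Complex.ofReal_natCast, ← Complex.ofReal_mul, Complex.exp_ofReal_mul_I_re,
    Complex.exp_ofReal_mul_I_im, sq]

theorem fejerKernel_nonneg (n : ℕ) (t : ℝ) : 0 ≤ fejerKernel n t := by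
  rw [fejerKernel_eq_sq_add_sq]
  positivity

theorem fejerKernel_mul_sin_sq_le (n : ℕ) (t : ℝ) : fejerKernel n t * sin (t / 2) ^ 2 ≤ 1 := by
  set z := Complex.exp (t * Complex.I)
  have hz : ‖z - 1‖ = 2 * |sin (t / 2)| := by
    rw [show z = Complex.exp (Complex.I * t) by rw [mul_comm],
      Complex.norm_exp_I_mul_ofReal_sub_one, norm_mul, Real.norm_two, Real.norm_eq_abs]
  have hzn : ‖z ^ n - 1‖ ≤ 2 :=
    (norm_sub_le _ _).trans (by norm_num [z, Complex.norm_exp_ofReal_mul_I])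
  have hgeom : ‖∑ j ∈ range n, z ^ j‖ * (2 * |sin (t / 2)|) ≤ 2 := by
    rw [← hz, ← norm_mul, geom_sum_mul]
    exact hzn
  rw [fejerKernel_eq_normSq, ← Complex.sq_norm, ← sq_abs (sin _), ← mul_pow]
  nlinarith [mul_nonneg (norm_nonneg (∑ j ∈ range n, z ^ j)) (abs_nonneg (sin (t / 2)))]

theorem fejerKernel_le_pi_sq_div_sq (ht : t ≠ 0) (htπ : |t| ≤ π) :
    fejerKernel n t ≤ π ^ 2 / t ^ 2 := by
  have hsin : |t| ≤ π * |sin (t / 2)| := by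
    have h := mul_abs_le_abs_sin (x := t / 2) (by rw [abs_div, abs_two]; linarith [pi_pos])
    rw [abs_div, abs_two] at h
    calc |t| = π * (2 / π * (|t| / 2)) := by field_simp
      _ ≤ π * |sin (t / 2)| := mul_le_mul_of_nonneg_left h pi_pos.le
  have ht2 : t ^ 2 ≤ π ^ 2 * sin (t / 2) ^ 2 := by
    rw [← sq_abs t, ← sq_abs (sin _), ← mul_pow]
    exact pow_le_pow_left₀ (abs_nonneg t) hsin 2
  rw [le_div_iff₀ (by positivity)]
  calc fejerKernel n t * t ^ 2 ≤ fejerKernel n t * (π ^ 2 * sin (t / 2) ^ 2) :=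
        mul_le_mul_of_nonneg_left ht2 (fejerKernel_nonneg n t)
    _ = π ^ 2 * (fejerKernel n t * sin (t / 2) ^ 2) := by ring
    _ ≤ π ^ 2 := mul_le_of_le_one_right (by positivity) (fejerKernel_mul_sin_sq_le n t)

theorem fejerKernel_le_sq (n : ℕ) (t : ℝ) : fejerKernel n t ≤ n ^ 2 := by
  calc fejerKernel n t ≤ ∑ j ∈ range n, ∑ k ∈ range n, (1 : ℝ) :=
        sum_le_sum fun j _ => sum_le_sum fun k _ => cos_le_one _
    _ = n ^ 2 := by simp [sq]

theorem jacksonKernel_le_pow_four (n : ℕ) (t : ℝ) : jacksonKernel n t ≤ n ^ 4 := by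
  rw [jacksonKernel, show (n : ℝ) ^ 4 = ((n : ℝ) ^ 2) ^ 2 by ring]
  exact pow_le_pow_left₀ (fejerKernel_nonneg n t) (fejerKernel_le_sq n t) 2

theorem sq_div_two_le_fejerKernel (ht : |t| ≤ 1 / n) : (n : ℝ) ^ 2 / 2 ≤ fejerKernel n t := by
  calc (n : ℝ) ^ 2 / 2 = ∑ j ∈ range n, ∑ k ∈ range n, (1 / 2 : ℝ) := by simp; ring
    _ ≤ fejerKernel n t := sum_le_sum fun j hj => sum_le_sum fun k hk => ?_
  have hj : (j : ℝ) < n := by exact_mod_cast mem_range.1 hj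
  have hk : (k : ℝ) < n := by exact_mod_cast mem_range.1 hk
  have hjk : |((j : ℝ) - k) * t| ≤ 1 := by
    rw [abs_mul]
    calc |(j : ℝ) - k| * |t| ≤ n * (1 / n) :=
          mul_le_mul (abs_sub_le_iff.2 ⟨by linarith, by linarith⟩) ht (abs_nonneg t) (by positivity)
      _ = 1 := mul_one_div_cancel (by linarith [k.cast_nonneg (α := ℝ)])
  nlinarith [one_sub_sq_div_two_le_cos (x := ((j : ℝ) - k) * t), sq_abs (((j : ℝ) - k) * t),
    abs_nonneg (((j : ℝ) - k) * t)]

theorem jacksonKernel_mem_trigPoly {M : ℕ} (hM : 2 * n ≤ M + 2) : jacksonKernel n ∈ trigPoly M := by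
  have hJ : jacksonKernel n = ∑ j ∈ range n, ∑ k ∈ range n, ∑ l ∈ range n, ∑ m ∈ range n,
      ((1 / 2 : ℝ) • (fun t => cos ((((j : ℤ) - k - (l - m) : ℤ) : ℝ) * t)) +
        (1 / 2 : ℝ) • fun t => cos ((((j : ℤ) - k + (l - m) : ℤ) : ℝ) * t)) := by
    funext t
    simp only [jacksonKernel, fejerKernel, sq, sum_mul, mul_sum, Finset.sum_apply, Pi.add_apply,
      Pi.smul_apply, smul_eq_mul]
    refine sum_congr rfl fun j _ => sum_congr rfl fun k _ => sum_congr rfl fun l _ =>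
      sum_congr rfl fun m _ => ?_
    have := two_mul_cos_mul_cos (((j : ℝ) - k) * t) (((l : ℝ) - m) * t)
    push_cast
    rw [show ((j : ℝ) - k - (l - m)) * t = ((j : ℝ) - k) * t - ((l : ℝ) - m) * t by ring,
      show ((j : ℝ) - k + (l - m)) * t = ((j : ℝ) - k) * t + ((l : ℝ) - m) * t by ring]
    linarith
  rw [hJ]
  refine sum_mem fun j hj => sum_mem fun k hk => sum_mem fun l hl => sum_mem fun m hm =>
    add_mem (Submodule.smul_mem _ _ (cos_int_mul_mem_trigPoly ?_))
      (Submodule.smul_mem _ _ (cos_int_mul_mem_trigPoly ?_)) <;>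
  simp only [mem_range] at hj hk hl hm <;> omega

theorem periodic_jacksonKernel (n : ℕ) : Function.Periodic (jacksonKernel n) (2 * π) :=
  periodic_of_mem_trigPoly (jacksonKernel_mem_trigPoly (M := 2 * n) (by omega))

theorem one_div_natCast_le_pi (hn : 1 ≤ n) : 1 / (n : ℝ) ≤ π := by
  linarith [pi_gt_three, div_le_self zero_le_one (by exact_mod_cast hn : (1 : ℝ) ≤ n)]

theorem pow_three_div_two_le_integral_jacksonKernel (hn : 1 ≤ n) :
    (n : ℝ) ^ 3 / 2 ≤ ∫ t in -π..π, jacksonKernel n t := by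
  have hn₀ : (0 : ℝ) < n := by exact_mod_cast hn
  calc (n : ℝ) ^ 3 / 2 = ∫ _ in -(1 / n)..(1 / n), (n : ℝ) ^ 4 / 4 := by
        rw [integral_const, smul_eq_mul]; field_simp; ring
    _ ≤ ∫ t in -(1 / n)..(1 / n), jacksonKernel n t := by
        refine integral_mono_on (by linarith [one_div_pos.2 hn₀]) (by simp)
          ((continuous_jacksonKernel n).intervalIntegrable _ _) fun t ht => ?_
        have := sq_div_two_le_fejerKernel (abs_le.2 ht)
        calc (n : ℝ) ^ 4 / 4 = ((n : ℝ) ^ 2 / 2) ^ 2 := by ring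
          _ ≤ jacksonKernel n t := pow_le_pow_left₀ (by positivity) this 2
    _ ≤ ∫ t in -π..π, jacksonKernel n t :=
        integral_mono_interval (by linarith [one_div_natCast_le_pi hn])
          (by linarith [one_div_pos.2 hn₀]) (one_div_natCast_le_pi hn)
          (Filter.Eventually.of_forall (jacksonKernel_nonneg n))
          ((continuous_jacksonKernel n).intervalIntegrable _ _)

theorem integral_jacksonKernel_pos (hn : 1 ≤ n) : 0 < ∫ t in -π..π, jacksonKernel n t :=
  lt_of_lt_of_le (by positivity) (pow_three_div_two_le_integral_jacksonKernel hn)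

theorem sq_mul_jacksonKernel_le (ht : t ≠ 0) (htπ : |t| ≤ π) :
    t ^ 2 * jacksonKernel n t ≤ π ^ 4 * (t ^ 2)⁻¹ := by
  calc t ^ 2 * jacksonKernel n t ≤ t ^ 2 * (π ^ 2 / t ^ 2) ^ 2 :=
        mul_le_mul_of_nonneg_left
          (pow_le_pow_left₀ (fejerKernel_nonneg n t) (fejerKernel_le_pi_sq_div_sq ht htπ) 2)
          (sq_nonneg t)
    _ = π ^ 4 * (t ^ 2)⁻¹ := by field_simp

theorem integral_sq_mul_jacksonKernel_le_pi_pow_four_mul {a b : ℝ} (hab : a ≤ b)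
    (h₀ : ∀ t ∈ Set.Icc a b, t ≠ 0) (hπ : ∀ t ∈ Set.Icc a b, |t| ≤ π) :
    ∫ t in a..b, t ^ 2 * jacksonKernel n t ≤ π ^ 4 * (a⁻¹ - b⁻¹) := by
  rw [← integral_inv_sq (by rw [Set.uIcc_of_le hab]; exact fun h => h₀ 0 h rfl),
    ← integral_const_mul]
  refine integral_mono_on hab
    (((continuous_pow 2).mul (continuous_jacksonKernel n)).intervalIntegrable _ _) ?_
    fun t ht => sq_mul_jacksonKernel_le (h₀ t ht) (hπ t ht)
  exact ContinuousOn.intervalIntegrable_of_Icc hab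
    (continuousOn_const.mul ((continuousOn_pow 2).inv₀ fun t ht => pow_ne_zero 2 (h₀ t ht)))

theorem integral_sq_mul_jacksonKernel_le (hn : 1 ≤ n) :
    ∫ t in -π..π, t ^ 2 * jacksonKernel n t ≤ (1 + 2 * π ^ 4) * n := by
  set δ := 1 / (n : ℝ) with hδ
  have hδ₀ : 0 < δ := by positivity
  have hδπ := one_div_natCast_le_pi hn
  have hint : ∀ a b,
      IntervalIntegrable (fun t => t ^ 2 * jacksonKernel n t) MeasureTheory.volume a b :=
    ((continuous_pow 2).mul (continuous_jacksonKernel n)).intervalIntegrable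
  have hleft := integral_sq_mul_jacksonKernel_le_pi_pow_four_mul (n := n) (a := -π) (b := -δ)
    (by linarith) (fun t ht => by linarith [ht.2])
    (fun t ht => by rw [abs_of_neg (by linarith [ht.2])]; linarith [ht.1])
  have hright := integral_sq_mul_jacksonKernel_le_pi_pow_four_mul (n := n) hδπ
    (fun t ht => by linarith [ht.1])
    (fun t ht => by rw [abs_of_pos (by linarith [ht.1])]; exact ht.2)
  have hmid : ∫ t in -δ..δ, t ^ 2 * jacksonKernel n t ≤ n := by
    calc ∫ t in -δ..δ, t ^ 2 * jacksonKernel n t ≤ ∫ t in -δ..δ, t ^ 2 * (n : ℝ) ^ 4 :=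
          integral_mono_on (by linarith) (hint _ _)
            ((by fun_prop : Continuous fun t : ℝ => t ^ 2 * (n : ℝ) ^ 4).intervalIntegrable _ _)
            fun t _ => mul_le_mul_of_nonneg_left (jacksonKernel_le_pow_four n t) (sq_nonneg t)
      _ = 2 / 3 * n := by
          rw [integral_mul_const, integral_pow, hδ]
          norm_num
          field_simp
          ring
      _ ≤ n := by linarith
  rw [← integral_add_adjacent_intervals (hint (-π) (-δ)) (hint (-δ) π),
    ← integral_add_adjacent_intervals (hint (-δ) δ) (hint δ π)]
  have hδinv : δ⁻¹ = n := by rw [hδ, one_div, inv_inv]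
  rw [inv_neg, inv_neg, hδinv] at hleft
  rw [hδinv] at hright
  nlinarith [mul_pos (pow_pos pi_pos 4) (inv_pos.2 pi_pos)]

theorem integral_two_add_sq_mul_jacksonKernel_le (hn : 1 ≤ n) :
    ∫ t in -π..π, (2 + n ^ 2 * t ^ 2) * jacksonKernel n t ≤
      4 * (1 + π ^ 4) * ∫ t in -π..π, jacksonKernel n t := by
  have hJ := continuous_jacksonKernel n
  have hc := pow_three_div_two_le_integral_jacksonKernel hn
  have hm := integral_sq_mul_jacksonKernel_le hn
  simp_rw [add_mul, mul_assoc]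
  have h₁ : Continuous fun t => 2 * jacksonKernel n t := by fun_prop
  have h₂ : Continuous fun t => (n : ℝ) ^ 2 * (t ^ 2 * jacksonKernel n t) := by fun_prop
  rw [integral_add (h₁.intervalIntegrable _ _) (h₂.intervalIntegrable _ _), integral_const_mul,
    integral_const_mul]
  nlinarith [pow_pos pi_pos 4, sq_nonneg (n : ℝ)]

end Kernel

section Operator

noncomputable def jacksonOp (n : ℕ) (g : ℝ → ℝ) (x : ℝ) : ℝ :=
  (∫ t in -π..π, g (x + t) * jacksonKernel n t) / ∫ t in -π..π, jacksonKernel n t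

noncomputable def jacksonError (n : ℕ) (g : ℝ → ℝ) : ℝ → ℝ := g - jacksonOp n g

variable {n : ℕ} {g : ℝ → ℝ}

theorem jacksonError_eq_integral (hn : 1 ≤ n) (hc : Continuous g) (x : ℝ) :
    jacksonError n g x =
      (∫ t in -π..π, (g x - g (x + t)) * jacksonKernel n t) / ∫ t in -π..π, jacksonKernel n t := by
  have hJ := continuous_jacksonKernel n
  simp_rw [sub_mul]
  rw [integral_sub
      ((by fun_prop : Continuous fun t => g x * jacksonKernel n t).intervalIntegrable _ _)
      ((by fun_prop : Continuous fun t => g (x + t) * jacksonKernel n t).intervalIntegrable _ _),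
    integral_const_mul, sub_div,
    mul_div_cancel_right₀ _ (integral_jacksonKernel_pos hn).ne']
  rfl

theorem abs_jacksonError_le (hn : 1 ≤ n) (hg : IsBounded (Set.range g)) (hc : Continuous g)
    (x : ℝ) : |jacksonError n g x| ≤ 4 * (1 + π ^ 4) * modulusOfContinuity g (1 / n) := by
  have hn₀ : (0 : ℝ) < n := by exact_mod_cast hn
  set ω := modulusOfContinuity g (1 / n)
  have hω : 0 ≤ ω := modulusOfContinuity_nonneg hg (by positivity)
  have hc₀ := integral_jacksonKernel_pos hn
  have hJ := continuous_jacksonKernel n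
  -- `1 + n|t| ≤ 2 + n²t²`, so the second moment of the kernel controls the error
  have hpt : ∀ t, |(g x - g (x + t)) * jacksonKernel n t| ≤
      ω * ((2 + n ^ 2 * t ^ 2) * jacksonKernel n t) := by
    intro t
    rw [abs_mul, abs_of_nonneg (jacksonKernel_nonneg n t), abs_sub_comm, ← mul_assoc, mul_comm ω]
    refine mul_le_mul_of_nonneg_right ?_ (jacksonKernel_nonneg n t)
    have h := abs_sub_le_one_add_div_mul_modulusOfContinuity hg (one_div_pos.2 hn₀) x t
    rw [div_div_eq_mul_div, div_one] at h
    exact h.trans (mul_le_mul_of_nonneg_right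
      (by nlinarith [sq_abs t, sq_nonneg (|t| * n - 1)]) hω)
  rw [jacksonError_eq_integral hn hc, abs_div, abs_of_pos hc₀, div_le_iff₀ hc₀]
  calc |∫ t in -π..π, (g x - g (x + t)) * jacksonKernel n t|
      ≤ ∫ t in -π..π, |(g x - g (x + t)) * jacksonKernel n t| :=
        abs_integral_le_integral_abs (by linarith [pi_pos])
    _ ≤ ∫ t in -π..π, ω * ((2 + n ^ 2 * t ^ 2) * jacksonKernel n t) :=
        integral_mono_on (by linarith [pi_pos])
          ((by fun_prop : Continuous _).intervalIntegrable _ _)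
          ((by fun_prop : Continuous _).intervalIntegrable _ _) fun t _ => hpt t
    _ ≤ ω * (4 * (1 + π ^ 4) * ∫ t in -π..π, jacksonKernel n t) := by
        rw [integral_const_mul]
        exact mul_le_mul_of_nonneg_left (integral_two_add_sq_mul_jacksonKernel_le hn) hω
    _ = 4 * (1 + π ^ 4) * ω * ∫ t in -π..π, jacksonKernel n t := by ring

theorem jacksonOp_mem_trigPoly (hper : Function.Periodic g (2 * π)) (hc : Continuous g) {M : ℕ}
    (hM : 2 * n ≤ M + 2) : jacksonOp n g ∈ trigPoly M := by
  have hshift : ∀ x, ∫ t in -π..π, g (x + t) * jacksonKernel n t =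
      ∫ u in -π..π, g u * jacksonKernel n (u - x) := by
    intro x
    have hp : Function.Periodic (fun u => g u * jacksonKernel n (u - x)) (2 * π) := fun u => by
      simp only [hper u, add_sub_right_comm, periodic_jacksonKernel n (u - x)]
    calc ∫ t in -π..π, g (x + t) * jacksonKernel n t
        = ∫ u in x + -π..x + π, g u * jacksonKernel n (u - x) := by
          simp only [← integral_comp_add_left (fun u => g u * jacksonKernel n (u - x)) x,
            add_sub_cancel_left]
      _ = ∫ u in -π..π, g u * jacksonKernel n (u - x) := by
          simpa only [show x + -π + 2 * π = x + π by ring, show -π + 2 * π = π by ring]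
            using hp.intervalIntegral_add_eq (x + -π) (-π)
  have : jacksonOp n g =
      (∫ t in -π..π, jacksonKernel n t)⁻¹ •
        fun x => ∫ u in -π..π, g u * jacksonKernel n (u - x) := by
    funext x
    simp only [jacksonOp, hshift, Pi.smul_apply, smul_eq_mul, div_eq_inv_mul]
  rw [this]
  exact Submodule.smul_mem _ _
    (integral_mul_comp_sub_mem_trigPoly hc (jacksonKernel_mem_trigPoly hM) _ _)

theorem hasDerivAt_jacksonOp (hper : Function.Periodic g (2 * π)) (hg : ContDiff ℝ 1 g) (x : ℝ) :
    HasDerivAt (jacksonOp n g) (jacksonOp n (deriv g) x) x := by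
  obtain ⟨B, hB⟩ := isBounded_iff_forall_norm_le.1
    (hper.deriv.isBounded_of_continuous (by positivity) (hg.continuous_deriv le_rfl))
  exact (hasDerivAt_integral_comp_add_mul hg (fun y => hB _ ⟨y, rfl⟩)
    (continuous_jacksonKernel n) x).div_const _

theorem periodic_jacksonError (hper : Function.Periodic g (2 * π)) (hc : Continuous g) :
    Function.Periodic (jacksonError n g) (2 * π) :=
  hper.sub (periodic_of_mem_trigPoly (jacksonOp_mem_trigPoly hper hc (M := 2 * n) (by omega)))

theorem contDiff_jacksonError (hper : Function.Periodic g (2 * π)) {k : ℕ}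
    (hg : ContDiff ℝ k g) : ContDiff ℝ k (jacksonError n g) :=
  hg.sub (contDiff_of_mem_trigPoly
    (jacksonOp_mem_trigPoly hper hg.continuous (M := 2 * n) (by omega)))

theorem deriv_jacksonError (hper : Function.Periodic g (2 * π)) (hg : ContDiff ℝ 1 g) :
    deriv (jacksonError n g) = jacksonError n (deriv g) :=
  funext fun x =>
    ((hg.differentiable one_ne_zero x).hasDerivAt.sub (hasDerivAt_jacksonOp hper hg x)).deriv

theorem iteratedDeriv_jacksonError (hper : Function.Periodic g (2 * π)) {k : ℕ}
    (hg : ContDiff ℝ k g) :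
    iteratedDeriv k (jacksonError n g) = jacksonError n (iteratedDeriv k g) := by
  induction k generalizing g with
  | zero => simp
  | succ k ih =>
    have hg' : ContDiff ℝ ((k : WithTop ℕ∞) + 1) g := by exact_mod_cast hg
    rw [iteratedDeriv_succ', iteratedDeriv_succ',
      deriv_jacksonError hper (hg.of_le (by norm_cast; omega)), ih hper.deriv hg'.deriv']

theorem modulusOfContinuity_jacksonError_le (hn : 1 ≤ n) (hper : Function.Periodic g (2 * π))
    (hg : ContDiff ℝ 1 g) :
    modulusOfContinuity (jacksonError n g) (1 / n) ≤
      1 / n * (4 * (1 + π ^ 4) * modulusOfContinuity (deriv g) (1 / n)) := by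
  have hc' : Continuous (deriv g) := hg.continuous_deriv le_rfl
  refine modulusOfContinuity_le_mul_of_abs_deriv_le (by positivity)
    ((contDiff_jacksonError hper hg).differentiable one_ne_zero) fun y => ?_
  rw [deriv_jacksonError hper hg]
  exact abs_jacksonError_le hn (hper.deriv.isBounded_of_continuous (by positivity) hc') hc' y

end Operator

section Iteration

variable {n : ℕ}

theorem abs_iterate_jacksonError_le (hn : 1 ≤ n) (j : ℕ) {g : ℝ → ℝ}
    (hper : Function.Periodic g (2 * π)) (hg : ContDiff ℝ j g) (x : ℝ) :
    |(jacksonError n)^[j + 1] g x| ≤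
      (4 * (1 + π ^ 4)) ^ (j + 1) * modulusOfContinuity (iteratedDeriv j g) (1 / n) / n ^ j := by
  induction j generalizing g with
  | zero =>
    simpa using abs_jacksonError_le hn (hper.isBounded_of_continuous (by positivity) hg.continuous)
      hg.continuous x
  | succ j ih =>
    have hgj : ContDiff ℝ j g := hg.of_le (by norm_cast; omega)
    have hder : ContDiff ℝ 1 (iteratedDeriv j g) := by
      rw [iteratedDeriv_eq_iterate]
      exact ContDiff.iterate_deriv' 1 j (by rwa [add_comm])
    rw [Function.iterate_succ_apply]
    calc |(jacksonError n)^[j + 1] (jacksonError n g) x|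
        ≤ (4 * (1 + π ^ 4)) ^ (j + 1) *
            modulusOfContinuity (iteratedDeriv j (jacksonError n g)) (1 / n) / n ^ j :=
          ih (periodic_jacksonError hper hg.continuous) (contDiff_jacksonError hper hgj)
      _ ≤ (4 * (1 + π ^ 4)) ^ (j + 1) * (1 / n * (4 * (1 + π ^ 4) *
            modulusOfContinuity (iteratedDeriv (j + 1) g) (1 / n))) / n ^ j := by
          rw [iteratedDeriv_jacksonError hper hgj, iteratedDeriv_succ]
          gcongr
          exact modulusOfContinuity_jacksonError_le hn (hper.iteratedDeriv j) hder
      _ = _ := by field_simp; ring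

theorem sub_iterate_jacksonError_mem_trigPoly {f : ℝ → ℝ} (hper : Function.Periodic f (2 * π))
    (hc : Continuous f) {M : ℕ} (hM : 2 * n ≤ M + 2) (m : ℕ) :
    f - (jacksonError n)^[m] f ∈ trigPoly M := by
  induction m generalizing f with
  | zero => simp
  | succ m ih =>
    have hEc : Continuous (jacksonError n f) :=
      contDiff_zero.1 (contDiff_jacksonError hper (k := 0) (contDiff_zero.2 hc))
    rw [Function.iterate_succ_apply, show f - (jacksonError n)^[m] (jacksonError n f) =
      jacksonOp n f + (jacksonError n f - (jacksonError n)^[m] (jacksonError n f)) by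
        rw [jacksonError]; abel]
    exact add_mem (jacksonOp_mem_trigPoly hper hc hM) (ih (periodic_jacksonError hper hc) hEc)

end Iteration

/-- Jackson's theorem: for every `K` there is `C_K > 0` (depending only on `K`)
such that every `2π`-periodic `C^K` function `f` can, for each `N ≥ 1`, be
approximated by a real trigonometric polynomial of degree at most
`⌈(K+3)/2⌉⌊N/2⌋` with uniform error `≤ C_K ω_{f^{(K)}}(1/N)/N^K`. -/
theorem jackson_inequality_univariate (K : ℕ) :
    ∃ C : ℝ, 0 < C ∧
      ∀ f : ℝ → ℝ, Function.Periodic f (2 * π) → ContDiff ℝ K f →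
        ∀ N : ℕ, 1 ≤ N →
          ∃ a b : ℕ → ℝ,
            ∀ x : ℝ,
              |f x - (a 0 + ∑ n ∈ Finset.Icc 1 (((K + 3 + 1) / 2) * (N / 2)),
                  (a n * Real.cos (n * x) + b n * Real.sin (n * x)))|
                ≤ C * modulusOfContinuity (iteratedDeriv K f) (1 / N) / (N : ℝ) ^ K := by
  refine ⟨3 * 2 ^ K * (4 * (1 + π ^ 4)) ^ (K + 1), by positivity, fun f hper hf N hN => ?_⟩
  set n := N / 2 + 1
  have hdeg : 2 * n ≤ (K + 3 + 1) / 2 * (N / 2) + 2 := by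
    have := Nat.mul_le_mul_right (N / 2) (by omega : 2 ≤ (K + 3 + 1) / 2)
    omega
  obtain ⟨a, b, hab⟩ :=
    sub_iterate_jacksonError_mem_trigPoly (n := n) hper hf.continuous hdeg (K + 1)
  refine ⟨a, b, fun x => ?_⟩
  rw [← hab x, Pi.sub_apply, sub_sub_cancel]
  have hb := (hper.iteratedDeriv K).isBounded_of_continuous (by positivity)
    (hf.continuous_iteratedDeriv' K)
  calc |(jacksonError n)^[K + 1] f x|
      ≤ (4 * (1 + π ^ 4)) ^ (K + 1) * modulusOfContinuity (iteratedDeriv K f) (1 / n) / n ^ K :=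
        abs_iterate_jacksonError_le (by omega) K hper hf x
    _ ≤ (4 * (1 + π ^ 4)) ^ (K + 1) * (3 * modulusOfContinuity (iteratedDeriv K f) (1 / N)) /
          (N / 2) ^ K := by
        gcongr
        · have := modulusOfContinuity_nonneg hb (one_div_pos.2 (Nat.cast_pos.2 hN))
          positivity
        · exact modulusOfContinuity_one_div_le_three_mul hb hN (by omega)
        · rw [div_le_iff₀ two_pos]
          exact_mod_cast (by omega : N ≤ n * 2)
    _ = _ := by rw [div_pow]; field_simp
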